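/- arXiv:math/0509006 — 4 statements merged into one kernel-verified Lean document; each statement's English description precedes it below -/
import Mathlib

section
/- Let X be a compact Hausdorff space and A ⊆ X a closed subset. If C(X) is approximately n-th root closed, then C(A) is approximately n-th root closed. -/
theorem stmt5 {X : Type*} [TopologicalSpace X] [CompactSpace X] [T2Space X]
    (n : ℕ) (hn : 1 ≤ n) (A : Set X) (hA : IsClosed A)
    (h : ∀ f : C(X, ℂ), ∀ ε > (0 : ℝ), ∃ g : C(X, ℂ), ∀ x, ‖f x - (g x) ^ n‖ < ε) :
    ∀ f : C(A, ℂ), ∀ ε > (0 : ℝ), ∃ g : C(A, ℂ), ∀ a, ‖f a - (g a) ^ n‖ < ε := by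
  intro f ε hε
  obtain ⟨F, hF⟩ := f.exists_restrict_eq hA
  obtain ⟨G, hG⟩ := h F ε hε
  refine ⟨G.restrict A, fun a => ?_⟩
  have : f a = F a := by rw [← hF]; rfl
  simpa [this] using hG a
end

section
/- Let X be a compact Hausdorff space and n ≥ 1. Suppose that for every closed subset A ⊆ X, every continuous f : A → ℂ∖{0} has a continuous n-th root g : A → ℂ∖{0} with gⁿ = f. Then C(X) is approximately n-th root closed: for every continuous f : X → ℂ and ε > 0 there is a continuous g : X → ℂ with sup_x |f(x) − g(x)ⁿ| < 2ε. -/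
theorem stmt8 {X : Type*} [TopologicalSpace X] [CompactSpace X] [T2Space X]
    (n : ℕ) (hn : 1 ≤ n)
    (h : ∀ A : Set X, IsClosed A → ∀ f : C(A, ℂ), (∀ a, f a ≠ 0) →
      ∃ g : C(A, ℂ), (∀ a, g a ≠ 0) ∧ ∀ a, (g a) ^ n = f a) :
    ∀ f : C(X, ℂ), ∀ ε > (0 : ℝ), ∃ g : C(X, ℂ),
      ∀ x, ‖f x - (g x) ^ n‖ < 2 * ε := by
  intro f ε hε
  have hn0 : n ≠ 0 := by omega
  set A : Set X := {x | ε ≤ ‖f x‖} with hA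
  have hAc : IsClosed A := isClosed_le continuous_const (f.continuous.norm)
  obtain ⟨g₀, hg₀ne, hg₀⟩ := h A hAc (f.restrict A) (fun a => by
    have : ε ≤ ‖f a‖ := a.2
    simp only [ContinuousMap.restrict_apply]
    intro hc
    rw [hc] at this
    simp at this
    linarith)
  obtain ⟨G, hG⟩ := g₀.exists_restrict_eq hAc
  -- radius function
  set r : X → ℝ := fun x => (max ‖f x‖ ε) ^ ((n : ℝ)⁻¹) with hr
  have hmax_pos : ∀ x, 0 < max ‖f x‖ ε := fun x => lt_of_lt_of_le hε (le_max_right _ _)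
  have hr_pos : ∀ x, 0 < r x := fun x => Real.rpow_pos_of_pos (hmax_pos x) _
  have hr_pow : ∀ x, r x ^ n = max ‖f x‖ ε := fun x =>
    Real.rpow_inv_natCast_pow (le_of_lt (hmax_pos x)) hn0
  have hr_cont : Continuous r := by
    apply Continuous.rpow_const
    · exact (f.continuous.norm).max continuous_const
    · intro x; right; positivity
  set c : X → ℝ := fun x => r x / max (r x) ‖G x‖ with hc
  have hden_pos : ∀ x, 0 < max (r x) ‖G x‖ := fun x =>
    lt_of_lt_of_le (hr_pos x) (le_max_left _ _)
  have hc_cont : Continuous c :=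
    hr_cont.div (hr_cont.max G.continuous.norm) (fun x => ne_of_gt (hden_pos x))
  have hc_nonneg : ∀ x, 0 ≤ c x := fun x => div_nonneg (hr_pos x).le (hden_pos x).le
  set g : C(X, ℂ) := ⟨fun x => (c x : ℂ) * G x,
    (Complex.continuous_ofReal.comp hc_cont).mul G.continuous⟩ with hgdef
  have hg_norm : ∀ x, ‖g x‖ = c x * ‖G x‖ := by
    intro x
    simp [hgdef, Complex.norm_real, abs_of_nonneg (hc_nonneg x)]
  have hg_le : ∀ x, ‖g x‖ ≤ r x := by
    intro x
    rw [hg_norm x, hc]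
    rw [div_mul_eq_mul_div, div_le_iff₀ (hden_pos x)]
    have := le_max_right (r x) ‖G x‖
    nlinarith [hr_pos x]
  refine ⟨g, fun x => ?_⟩
  by_cases hx : ε ≤ ‖f x‖
  · -- x ∈ A
    have hxA : x ∈ A := hx
    have hGx : G x = g₀ ⟨x, hxA⟩ := by
      have := congrArg (fun φ => ContinuousMap.toFun φ ⟨x, hxA⟩) hG
      simpa using this
    have hGn : g₀ ⟨x, hxA⟩ ^ n = f x := by
      have := hg₀ ⟨x, hxA⟩
      simpa using this
    have hnorm : ‖G x‖ ^ n = ‖f x‖ := by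
      rw [hGx, ← norm_pow, hGn]
    have hGle : ‖G x‖ ≤ r x := by
      have h1 : ‖G x‖ ^ n ≤ r x ^ n := by
        rw [hnorm, hr_pow x]; exact le_max_left _ _
      exact le_of_pow_le_pow_left₀ hn0 (hr_pos x).le h1
    have hmax : max (r x) ‖G x‖ = r x := max_eq_left hGle
    have hcx : c x = 1 := by rw [hc]; simp only; rw [hmax, div_self (hr_pos x).ne']
    have : g x = G x := by simp [hgdef, hcx]
    rw [this, hGx, hGn]
    simp
    positivity
  · push_neg at hx
    have hgn : ‖g x ^ n‖ ≤ ε := by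
      rw [norm_pow]
      calc ‖g x‖ ^ n ≤ r x ^ n := pow_le_pow_left₀ (norm_nonneg _) (hg_le x) n
        _ = max ‖f x‖ ε := hr_pow x
        _ = ε := max_eq_right hx.le
    have := norm_sub_le (f x) (g x ^ n)
    linarith
end

section
/- Let X be a compact Hausdorff space and n ≥ 1. Suppose C(X) is approximately n-th root closed. Then for every closed subset A ⊆ X, the group C(A, ℂ∖{0}) of nowhere-vanishing continuous functions is approximately n-th root closed: for every continuous f : A → ℂ∖{0} and ε > 0 there exists a continuous g : A → ℂ∖{0} with sup_{x∈A} |f(x) − g(x)ⁿ| < 2ε. -/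
theorem stmt9 {X : Type*} [TopologicalSpace X] [CompactSpace X] [T2Space X]
    (n : ℕ) (hn : 1 ≤ n)
    (h : ∀ f : C(X, ℂ), ∀ ε > (0 : ℝ), ∃ g : C(X, ℂ), ∀ x, ‖f x - (g x) ^ n‖ < ε) :
    ∀ A : Set X, IsClosed A → ∀ f : C(A, ℂ), (∀ a, f a ≠ 0) →
      ∀ ε > (0 : ℝ), ∃ g : C(A, ℂ), (∀ a, g a ≠ 0) ∧
        ∀ a, ‖f a - (g a) ^ n‖ < 2 * ε := by
  intro A hA f hf ε hε
  rcases isEmpty_or_nonempty A with hE | hne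
  · exact ⟨1, fun a => (hE.false a).elim, fun a => (hE.false a).elim⟩
  -- minimum of ‖f‖ on A
  have : CompactSpace A := isCompact_iff_compactSpace.mp hA.isCompact
  obtain ⟨a₀, -, ha₀⟩ := isCompact_univ.exists_isMinOn Set.univ_nonempty
    (f.continuous.norm.continuousOn)
  have hδ : 0 < ‖f a₀‖ := norm_pos_iff.mpr (hf a₀)
  obtain ⟨F, hF⟩ := f.exists_restrict_eq (Y := ℂ) hA
  obtain ⟨G, hG⟩ := h F (min ε ‖f a₀‖) (lt_min hε hδ)
  refine ⟨G.restrict A, ?_, ?_⟩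
  · intro a
    have key : ‖f a - (G a) ^ n‖ < ‖f a₀‖ := by
      have := hG a
      rw [show F (a : X) = f a by rw [← hF]; rfl] at this
      calc ‖f a - (G a) ^ n‖ < min ε ‖f a₀‖ := this
        _ ≤ ‖f a₀‖ := min_le_right _ _
    intro h0
    simp only [ContinuousMap.restrict_apply] at h0
    rw [h0, zero_pow (by omega), sub_zero] at key
    exact absurd (ha₀ (Set.mem_univ a)) (not_le.mpr key)
  · intro a
    have := hG a
    rw [show F (a : X) = f a by rw [← hF]; rfl] at this
    calc ‖f a - (G.restrict A a) ^ n‖ = ‖f a - (G a) ^ n‖ := rfl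
      _ < min ε ‖f a₀‖ := this
      _ ≤ ε := min_le_left _ _
      _ < 2 * ε := by linarith
end

section
/- Let X be a compact Hausdorff space and n ≥ 1. If for every closed A ⊆ X the group C(A, ℂ∖{0}) is approximately n-th root closed, then for every closed A ⊆ X the group C(A, ℂ∖{0}) is exactly n-th root closed: every continuous f : A → ℂ∖{0} has a continuous g : A → ℂ∖{0} with gⁿ = f. -/
theorem stmt11 {X : Type*} [TopologicalSpace X] [CompactSpace X] [T2Space X]
    (n : ℕ) (hn : 1 ≤ n)
    (h : ∀ A : Set X, IsClosed A → ∀ f : C(A, ℂ), (∀ a, f a ≠ 0) →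
      ∀ ε > (0 : ℝ), ∃ g : C(A, ℂ), (∀ a, g a ≠ 0) ∧ ∀ a, ‖f a - (g a) ^ n‖ < ε) :
    ∀ A : Set X, IsClosed A → ∀ f : C(A, ℂ), (∀ a, f a ≠ 0) →
      ∃ g : C(A, ℂ), (∀ a, g a ≠ 0) ∧ ∀ a, (g a) ^ n = f a := by
  intro A hA f hf
  cases isEmpty_or_nonempty A with
  | inl hemp =>
      exact ⟨1, fun a => (hemp.false a).elim, fun a => (hemp.false a).elim⟩
  | inr hne =>
      have hcs : CompactSpace A := isCompact_iff_compactSpace.mp (hA.isCompact)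
      -- min of ‖f‖
      obtain ⟨a₀, -, ha₀⟩ := isCompact_univ.exists_isMinOn (Set.univ_nonempty)
        (f.continuous.norm.continuousOn)
      set m : ℝ := ‖f a₀‖ with hm
      have hm0 : 0 < m := norm_pos_iff.mpr (hf a₀)
      have hmle : ∀ a : A, m ≤ ‖f a‖ := fun a => ha₀ (Set.mem_univ a)
      obtain ⟨g, hg0, hgclose⟩ := h A hA f hf (m / 2) (by linarith)
      -- quotient q = f / gⁿ lies in ball(1,1)
      have hgn : ∀ a : A, m / 2 < ‖(g a) ^ n‖ := by
        intro a
        have h1 := hgclose a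
        have h2 := hmle a
        have := norm_sub_norm_le (f a) ((g a) ^ n)
        linarith
      have hq1 : ∀ a : A, ‖f a / (g a) ^ n - 1‖ < 1 := by
        intro a
        have hne : (g a) ^ n ≠ 0 := pow_ne_zero _ (hg0 a)
        have : f a / (g a) ^ n - 1 = (f a - (g a) ^ n) / (g a) ^ n := by
          field_simp
        rw [this, norm_div]
        rw [div_lt_one (lt_trans (by linarith) (hgn a))]
        exact lt_trans (hgclose a) (hgn a)
      have hslit : ∀ a : A, f a / (g a) ^ n ∈ Complex.slitPlane := by
        intro a
        rw [Complex.mem_slitPlane_iff]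
        left
        have := hq1 a
        have hre : |(f a / (g a) ^ n - 1).re| ≤ ‖f a / (g a) ^ n - 1‖ :=
          Complex.abs_re_le_norm _
        have : |(f a / (g a) ^ n).re - 1| < 1 := by
          simpa using lt_of_le_of_lt hre this
        have := abs_lt.mp this
        linarith [this.1]
      have hqne : ∀ a : A, f a / (g a) ^ n ≠ 0 :=
        fun a => div_ne_zero (hf a) (pow_ne_zero _ (hg0 a))
      -- root of the quotient
      have hcont : Continuous fun a : A => Complex.exp (Complex.log (f a / (g a) ^ n) / n) := by
        apply Complex.continuous_exp.comp
        apply Continuous.div_const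
        rw [continuous_iff_continuousAt]
        intro a
        have hdiv : ContinuousAt (fun a : A => f a / (g a) ^ n) a :=
          (f.continuous.continuousAt).div
            ((g.continuous.pow n).continuousAt) (pow_ne_zero _ (hg0 a))
        exact ContinuousAt.comp (x := a) (continuousAt_clog (hslit a)) hdiv
      set r : C(A, ℂ) := ⟨_, hcont⟩ with hr
      refine ⟨g * r, fun a => mul_ne_zero (hg0 a) (Complex.exp_ne_zero _), fun a => ?_⟩
      have hn0 : (n : ℂ) ≠ 0 := Nat.cast_ne_zero.mpr (by omega)
      have hrpow : (r a) ^ n = f a / (g a) ^ n := by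
        show (Complex.exp _) ^ n = _
        rw [← Complex.exp_nat_mul, mul_div_cancel₀ _ hn0, Complex.exp_log (hqne a)]
      have : ((g * r) a) ^ n = (g a) ^ n * (r a) ^ n := by
        simp [mul_pow]
      rw [this, hrpow, mul_div_cancel₀ _ (pow_ne_zero _ (hg0 a))]
end
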